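/- With the 16 points a1,…,a16 as above, the quadrilateral a4 a8 a12 a16 has strictly larger area than every quadrilateral whose four vertices are chosen among a1,…,a16 other than {a4,a8,a12,a16}; i.e., a4 a8 a12 a16 is the unique maximum-area quadrilateral with vertices among these 16 points. -/

import Mathlib

open MeasureTheory

/-- Cross product of two planar vectors. -/
noncomputable def cross (u v : ℝ × ℝ) : ℝ := u.1 * v.2 - u.2 * v.1

/-- Signed area of triangle `p q r`. -/
noncomputable def sArea (p q r : ℝ × ℝ) : ℝ :=
  ((q.1 - p.1) * (r.2 - p.2) - (q.2 - p.2) * (r.1 - p.1)) / 2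

/-- (Unsigned) area of triangle `p q r`. -/
noncomputable def triArea (p q r : ℝ × ℝ) : ℝ :=
  |(q.1 - p.1) * (r.2 - p.2) - (q.2 - p.2) * (r.1 - p.1)| / 2

/-- Shoelace area of a quadrilateral `p q r s` given in cyclic order. -/
noncomputable def quadArea (p q r s : ℝ × ℝ) : ℝ :=
  |p.1 * (q.2 - s.2) + q.1 * (r.2 - p.2) + r.1 * (s.2 - q.2) + s.1 * (p.2 - r.2)| / 2

/-- Area of the convex hull of a finite planar point set. -/
noncomputable def hullArea (S : Finset (ℝ × ℝ)) : ENNReal :=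
  volume (convexHull ℝ (S : Set (ℝ × ℝ)))
noncomputable def a1 : ℝ × ℝ := (26096, 6750)
noncomputable def a2 : ℝ × ℝ := (26130, 9933)
noncomputable def a3 : ℝ × ℝ := (25940, 10728)
noncomputable def a4 : ℝ × ℝ := (23090, 22189)
noncomputable def a5 : ℝ × ℝ := (18106, 23681)
noncomputable def a6 : ℝ × ℝ := (13484, 24407)
noncomputable def a7 : ℝ × ℝ := (13174, 24343)
noncomputable def a8 : ℝ × ℝ := (3090, 22189)
noncomputable def a9 : ℝ × ℝ := (0, 17308)
noncomputable def a10 : ℝ × ℝ := (80, 14350)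
noncomputable def a11 : ℝ × ℝ := (323, 13331)
noncomputable def a12 : ℝ × ℝ := (3090, 2189)
noncomputable def a13 : ℝ × ℝ := (8459, 385)
noncomputable def a14 : ℝ × ℝ := (12837, 0)
noncomputable def a15 : ℝ × ℝ := (13392, 114)
noncomputable def a16 : ℝ × ℝ := (23090, 2189)

/-- The 16 vertices of the counterexample polygon, in counterclockwise order. -/
noncomputable def pts : Fin 16 → ℝ × ℝ :=
  ![a1, a2, a3, a4, a5, a6, a7, a8, a9, a10, a11, a12, a13, a14, a15, a16]

/-! The sixteen points are in strictly convex position, numbered counterclockwise, so for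
`i < j < k < l` the convex hull of `pts i, pts j, pts k, pts l` is covered by the triangles
`(i, j, k)` and `(i, k, l)`. A triangle is an affine image of the standard one, of area `1/2`, so
its area is the absolute value of its signed area, and the hull has area at most the shoelace
area of the quadrilateral. An exact integer computation over all quadruples shows that this is
below `4 · 10⁸` except for `a4 a8 a12 a16`, whose hull is a `20000 × 20000` square. -/

open Set Pointwise

section HalfPlane

variable {p q r z : ℝ × ℝ}

lemma sArea_smul_add_smul (p q x y : ℝ × ℝ) {a b : ℝ} (hab : a + b = 1) :
    sArea p q (a • x + b • y) = a * sArea p q x + b * sArea p q y := by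
  obtain rfl : b = 1 - a := by linarith
  simp only [sArea, Prod.fst_add, Prod.snd_add, Prod.smul_fst, Prod.smul_snd, smul_eq_mul]
  ring

lemma convex_setOf_sArea_nonneg (p q : ℝ × ℝ) : Convex ℝ {z | 0 ≤ sArea p q z} := by
  intro x hx y hy a b ha hb hab
  simp only [mem_ofPred_eq, sArea_smul_add_smul p q x y hab] at *
  positivity

lemma mem_convexHull_triple_of_sArea_nonneg (h : 0 < sArea p q r) (hpq : 0 ≤ sArea p q z)
    (hqr : 0 ≤ sArea q r z) (hrp : 0 ≤ sArea r p z) :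
    z ∈ convexHull ℝ ({p, q, r} : Set (ℝ × ℝ)) := by
  have hsum : sArea q r z + sArea r p z + sArea p q z = sArea p q r := by
    simp only [sArea]; ring
  -- the barycentric coordinates of `z` are the areas of the three triangles it spans with the sides
  have hz : (Finset.univ : Finset (Fin 3)).centerMass ![sArea q r z, sArea r p z, sArea p q z]
      ![p, q, r] = z := by
    rw [Finset.centerMass, Fin.sum_univ_three, Fin.sum_univ_three]
    simp only [Matrix.cons_val_zero, Matrix.cons_val_one, Matrix.cons_val_two, Matrix.tail_cons,
      Matrix.head_cons, hsum]
    ext <;> simp only [Prod.smul_fst, Prod.smul_snd, Prod.fst_add, Prod.snd_add, smul_eq_mul] <;>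
      field_simp <;> simp only [sArea] <;> ring
  rw [← hz]
  refine Finset.centerMass_mem_convexHull _ (fun i _ ↦ ?_) ?_ (fun i _ ↦ ?_)
  · fin_cases i <;> assumption
  · simpa [Fin.sum_univ_three, hsum] using h
  · fin_cases i <;> simp

theorem convexHull_triple_eq (h : 0 < sArea p q r) :
    convexHull ℝ ({p, q, r} : Set (ℝ × ℝ)) =
      {z | 0 ≤ sArea p q z ∧ 0 ≤ sArea q r z ∧ 0 ≤ sArea r p z} := by
  refine subset_antisymm (convexHull_min ?_ ?_) fun z ⟨hpq, hqr, hrp⟩ ↦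
    mem_convexHull_triple_of_sArea_nonneg h hpq hqr hrp
  · rintro w (rfl | rfl | rfl) <;> simp only [mem_ofPred_eq, sArea] at h ⊢ <;>
      refine ⟨?_, ?_, ?_⟩ <;> linarith
  · exact (convex_setOf_sArea_nonneg p q).inter
      ((convex_setOf_sArea_nonneg q r).inter (convex_setOf_sArea_nonneg r p))

end HalfPlane

theorem volume_region_between_cc_eq_lintegral {α : Type*} [MeasurableSpace α] {μ : Measure α}
    [SFinite μ] {f g : α → ℝ} (hf : Measurable f) (hg : Measurable g) {s : Set α}
    (hs : MeasurableSet s) :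
    μ.prod volume {p : α × ℝ | p.1 ∈ s ∧ p.2 ∈ Icc (f p.1) (g p.1)} =
      ∫⁻ x in s, ENNReal.ofReal (g x - f x) ∂μ := by
  rw [Measure.prod_apply (measurableSet_region_between_cc hf hg hs), ← lintegral_indicator hs]
  refine lintegral_congr fun x ↦ ?_
  by_cases hx : x ∈ s <;> simp [hx, preimage, Icc_def]

lemma volume_convexHull_stdTriangle :
    volume (convexHull ℝ ({(0, 0), (1, 0), (0, 1)} : Set (ℝ × ℝ))) = ENNReal.ofReal (1 / 2) := by
  have hT : convexHull ℝ ({(0, 0), (1, 0), (0, 1)} : Set (ℝ × ℝ)) =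
      {p | p.1 ∈ Icc 0 1 ∧ p.2 ∈ Icc 0 (1 - p.1)} := by
    rw [convexHull_triple_eq (by norm_num [sArea])]
    ext ⟨x, y⟩
    norm_num [sArea]
    constructor
    · rintro ⟨hy, hxy, hx⟩; refine ⟨⟨?_, ?_⟩, ?_, ?_⟩ <;> linarith
    · rintro ⟨⟨hx, -⟩, hy, hxy⟩; refine ⟨?_, ?_, ?_⟩ <;> linarith
  rw [hT, Measure.volume_eq_prod, volume_region_between_cc_eq_lintegral measurable_const
    (by fun_prop) measurableSet_Icc, ← ofReal_integral_eq_lintegral_ofReal]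
  · rw [integral_Icc_eq_integral_Ioc, ← intervalIntegral.integral_of_le zero_le_one,
      funext fun x : ℝ ↦ sub_zero (1 - x), intervalIntegral.integral_sub intervalIntegrable_const
      intervalIntegral.intervalIntegrable_id, integral_id]
    norm_num
  · exact Continuous.integrableOn_Icc (by fun_prop)
  · exact (ae_restrict_mem measurableSet_Icc).mono fun x hx ↦ by simpa using hx.2

theorem volume_convexHull_triple (p q r : ℝ × ℝ) :
    volume (convexHull ℝ ({p, q, r} : Set (ℝ × ℝ))) = ENNReal.ofReal (triArea p q r) := by
  let f : ℝ × ℝ →ₗ[ℝ] ℝ × ℝ := Matrix.toLin (Module.Basis.finTwoProd ℝ)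
    (Module.Basis.finTwoProd ℝ) !![q.1 - p.1, r.1 - p.1; q.2 - p.2, r.2 - p.2]
  have hf (x : ℝ × ℝ) : f x = ((q.1 - p.1) * x.1 + (r.1 - p.1) * x.2,
      (q.2 - p.2) * x.1 + (r.2 - p.2) * x.2) := Matrix.toLin_finTwoProd_apply _ _ _ _ _
  have hdet : LinearMap.det f = (q.1 - p.1) * (r.2 - p.2) - (q.2 - p.2) * (r.1 - p.1) := by
    rw [LinearMap.det_toLin, Matrix.det_fin_two_of]; ring
  have hhull : convexHull ℝ ({p, q, r} : Set (ℝ × ℝ)) =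
      p +ᵥ f '' convexHull ℝ {(0, 0), (1, 0), (0, 1)} := by
    rw [LinearMap.image_convexHull, ← convexHull_vadd]
    congr 1
    have hq : p + f (1, 0) = q := by ext <;> simp [hf]
    have hr : p + f (0, 1) = r := by ext <;> simp [hf]
    simp only [image_insert_eq, image_singleton, vadd_set_insert, vadd_set_singleton, map_zero,
      vadd_eq_add, add_zero, ← Prod.zero_eq_mk]
    rw [hq, hr]
  rw [hhull, measure_vadd, Measure.addHaar_image_linearMap, volume_convexHull_stdTriangle, hdet,
    ← ENNReal.ofReal_mul (abs_nonneg _), triArea]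
  ring_nf

section Quadrilateral

variable {p q r s : ℝ × ℝ}

lemma triArea_eq_abs_sArea (p q r : ℝ × ℝ) : triArea p q r = |sArea p q r| := by
  rw [triArea, sArea, abs_div, abs_two]

lemma quadArea_eq_abs_sArea_add_sArea (p q r s : ℝ × ℝ) :
    quadArea p q r s = |sArea p q r + sArea p r s| := by
  rw [quadArea, sArea, sArea, ← add_div, abs_div, abs_two]
  ring_nf

theorem convexHull_quad_subset_union (hpqr : 0 < sArea p q r) (hprs : 0 < sArea p r s)
    (hpqs : 0 ≤ sArea p q s) (hqrs : 0 ≤ sArea q r s) :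
    convexHull ℝ ({p, q, r, s} : Set (ℝ × ℝ)) ⊆
      convexHull ℝ {p, q, r} ∪ convexHull ℝ {p, r, s} := by
  have hsub : convexHull ℝ ({p, q, r, s} : Set (ℝ × ℝ)) ⊆
      {z | 0 ≤ sArea p q z ∧ 0 ≤ sArea q r z ∧ 0 ≤ sArea r s z ∧ 0 ≤ sArea s p z} := by
    refine convexHull_min ?_ ((convex_setOf_sArea_nonneg p q).inter
      ((convex_setOf_sArea_nonneg q r).inter
        ((convex_setOf_sArea_nonneg r s).inter (convex_setOf_sArea_nonneg s p))))
    rintro w (rfl | rfl | rfl | rfl) <;> simp only [mem_ofPred_eq, sArea] at * <;>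
      refine ⟨?_, ?_, ?_, ?_⟩ <;> linarith
  rw [convexHull_triple_eq hpqr, convexHull_triple_eq hprs]
  intro z hz
  obtain ⟨hpq, hqr, hrs, hsp⟩ := hsub hz
  rcases le_or_gt 0 (sArea p r z) with hpr | hpr
  · exact Or.inr ⟨hpr, hrs, hsp⟩
  · refine Or.inl ⟨hpq, hqr, ?_⟩
    simp only [sArea] at hpr ⊢
    linarith

theorem volume_convexHull_quad_le (hpqr : 0 < sArea p q r) (hprs : 0 < sArea p r s)
    (hpqs : 0 ≤ sArea p q s) (hqrs : 0 ≤ sArea q r s) :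
    volume (convexHull ℝ ({p, q, r, s} : Set (ℝ × ℝ))) ≤ ENNReal.ofReal (quadArea p q r s) :=
  calc volume (convexHull ℝ ({p, q, r, s} : Set (ℝ × ℝ)))
      ≤ volume (convexHull ℝ {p, q, r} ∪ convexHull ℝ {p, r, s}) :=
        measure_mono (convexHull_quad_subset_union hpqr hprs hpqs hqrs)
    _ ≤ volume (convexHull ℝ {p, q, r}) + volume (convexHull ℝ {p, r, s}) := measure_union_le _ _
    _ = ENNReal.ofReal (quadArea p q r s) := by
        rw [volume_convexHull_triple, volume_convexHull_triple, triArea_eq_abs_sArea,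
          triArea_eq_abs_sArea, abs_of_pos hpqr, abs_of_pos hprs, quadArea_eq_abs_sArea_add_sArea,
          abs_of_pos (add_pos hpqr hprs), ENNReal.ofReal_add hpqr.le hprs.le]

end Quadrilateral

theorem volume_convexHull_rectangle {x₁ x₂ y₁ y₂ : ℝ} (hx : x₁ ≤ x₂) (hy : y₁ ≤ y₂) :
    volume (convexHull ℝ ({(x₂, y₂), (x₁, y₂), (x₁, y₁), (x₂, y₁)} : Set (ℝ × ℝ))) =
      ENNReal.ofReal ((x₂ - x₁) * (y₂ - y₁)) := by
  have hprod : ({(x₂, y₂), (x₁, y₂), (x₁, y₁), (x₂, y₁)} : Set (ℝ × ℝ)) =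
      ({x₁, x₂} : Set ℝ) ×ˢ ({y₁, y₂} : Set ℝ) := by
    ext ⟨x, y⟩
    simp only [mem_insert_iff, mem_singleton_iff, mem_prod, Prod.mk.injEq]
    tauto
  rw [hprod, convexHull_prod, convexHull_pair, convexHull_pair, segment_eq_Icc hx,
    segment_eq_Icc hy, Measure.volume_eq_prod, Measure.prod_prod, Real.volume_Icc,
    Real.volume_Icc, ← ENNReal.ofReal_mul (sub_nonneg.2 hx)]

theorem Finset.exists_sorted_of_card_eq_four {α : Type*} [LinearOrder α] {s : Finset α}
    (hs : s.card = 4) : ∃ a b c d, a < b ∧ b < c ∧ c < d ∧ s = {a, b, c, d} := by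
  set e := s.orderEmbOfFin hs
  refine ⟨e 0, e 1, e 2, e 3, e.strictMono (by decide), e.strictMono (by decide),
    e.strictMono (by decide), ?_⟩
  apply Finset.coe_injective
  rw [← Finset.range_orderEmbOfFin s hs]
  ext x
  simp only [Set.mem_range, Finset.coe_insert, Finset.coe_singleton, mem_insert_iff,
    mem_singleton_iff]
  constructor
  · rintro ⟨i, rfl⟩
    fin_cases i <;> simp [e]
  · rintro (rfl | rfl | rfl | rfl) <;> exact ⟨_, rfl⟩

-- An integer copy of `pts`, so that the finite checks below are run by `decide`.
def ptsZ : Fin 16 → ℤ × ℤ :=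
  ![(26096, 6750), (26130, 9933), (25940, 10728), (23090, 22189), (18106, 23681),
    (13484, 24407), (13174, 24343), (3090, 22189), (0, 17308), (80, 14350),
    (323, 13331), (3090, 2189), (8459, 385), (12837, 0), (13392, 114), (23090, 2189)]

lemma pts_eq_cast_ptsZ : pts = Prod.map (↑) (↑) ∘ ptsZ := by
  funext i
  fin_cases i <;>
    norm_num [pts, ptsZ, a1, a2, a3, a4, a5, a6, a7, a8, a9, a10, a11, a12, a13, a14, a15, a16]

lemma ptsZ_injective : Function.Injective ptsZ := by decide

lemma pts_injective : Function.Injective pts :=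
  pts_eq_cast_ptsZ ▸
    (Prod.map_injective.2 ⟨Int.cast_injective, Int.cast_injective⟩).comp ptsZ_injective

def twiceSAreaZ (i j k : Fin 16) : ℤ :=
  ((ptsZ j).1 - (ptsZ i).1) * ((ptsZ k).2 - (ptsZ i).2)
    - ((ptsZ j).2 - (ptsZ i).2) * ((ptsZ k).1 - (ptsZ i).1)

lemma sArea_pts (i j k : Fin 16) : sArea (pts i) (pts j) (pts k) = twiceSAreaZ i j k / 2 := by
  simp only [pts_eq_cast_ptsZ, sArea, twiceSAreaZ, Function.comp_apply, Prod.map_fst,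
    Prod.map_snd]
  push_cast
  ring

theorem twiceSAreaZ_pos : ∀ i j k : Fin 16, i < j → j < k → 0 < twiceSAreaZ i j k := by
  decide

theorem twiceSAreaZ_add_lt : ∀ i j k l : Fin 16, i < j → j < k → k < l →
    (i, j, k, l) ≠ (3, 7, 11, 15) → twiceSAreaZ i j k + twiceSAreaZ i k l < 800000000 := by
  decide

section Quadruples

variable {i j k l : Fin 16}

lemma sArea_pts_pos (hij : i < j) (hjk : j < k) : 0 < sArea (pts i) (pts j) (pts k) := by
  rw [sArea_pts]
  exact div_pos (Int.cast_pos.2 (twiceSAreaZ_pos i j k hij hjk)) two_pos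

lemma quadArea_pts_lt (hij : i < j) (hjk : j < k) (hkl : k < l)
    (hsq : (i, j, k, l) ≠ (3, 7, 11, 15)) :
    quadArea (pts i) (pts j) (pts k) (pts l) < 400000000 := by
  have hlt : (twiceSAreaZ i j k + twiceSAreaZ i k l : ℝ) < 800000000 := by
    exact_mod_cast twiceSAreaZ_add_lt i j k l hij hjk hkl hsq
  rw [quadArea_eq_abs_sArea_add_sArea, abs_of_pos (add_pos (sArea_pts_pos hij hjk)
    (sArea_pts_pos (hij.trans hjk) hkl)), sArea_pts, sArea_pts]
  linarith

lemma volume_convexHull_pts_lt (hij : i < j) (hjk : j < k) (hkl : k < l)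
    (hsq : (i, j, k, l) ≠ (3, 7, 11, 15)) :
    volume (convexHull ℝ ({pts i, pts j, pts k, pts l} : Set (ℝ × ℝ))) <
      ENNReal.ofReal 400000000 :=
  (volume_convexHull_quad_le (sArea_pts_pos hij hjk) (sArea_pts_pos (hij.trans hjk) hkl)
    (sArea_pts_pos hij (hjk.trans hkl)).le (sArea_pts_pos hjk hkl).le).trans_lt
    ((ENNReal.ofReal_lt_ofReal_iff (by norm_num)).2 (quadArea_pts_lt hij hjk hkl hsq))

end Quadruples

lemma hullArea_square : hullArea {a4, a8, a12, a16} = ENNReal.ofReal 400000000 := by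
  rw [hullArea]
  push_cast
  rw [a4, a8, a12, a16, volume_convexHull_rectangle (by norm_num) (by norm_num)]
  norm_num

/-- `a4 a8 a12 a16` is the unique maximum-area quadrilateral with vertices among
the 16 points of the counterexample polygon. -/
theorem unique_max_quadrilateral :
    ∀ S ⊆ Finset.image pts Finset.univ, S.card = 4 →
      S ≠ ({a4, a8, a12, a16} : Finset (ℝ × ℝ)) →
      hullArea S < hullArea ({a4, a8, a12, a16} : Finset (ℝ × ℝ)) := by
  intro S hS hcard hne
  obtain ⟨T, -, rfl⟩ := Finset.subset_image_iff.mp hS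
  rw [Finset.card_image_of_injective T pts_injective] at hcard
  obtain ⟨i, j, k, l, hij, hjk, hkl, rfl⟩ := Finset.exists_sorted_of_card_eq_four hcard
  have hsq : (i, j, k, l) ≠ (3, 7, 11, 15) := by
    rintro ⟨⟩
    exact hne (by simp [pts])
  rw [hullArea_square, hullArea]
  push_cast [Finset.image_insert, Finset.image_singleton]
  exact volume_convexHull_pts_lt hij hjk hkl hsq
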